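/- arXiv:1902.09570 — 3 statements merged into one kernel-verified Lean document; each statement's English description precedes it below -/
import Mathlib

section
/- There is no finitely supported surjection from the set A of atoms onto ℘_fin(A), the set of finite subsets of A with the elementwise action of finitary permutations. -/
open Pointwise

/-- The group of finitary permutations of the set `A` of atoms: bijections of `A`
whose set of non-fixed points is finite. -/
def FinPerm (A : Type*) : Subgroup (Equiv.Perm A) where
  carrier := {π : Equiv.Perm A | {a : A | π a ≠ a}.Finite}
  one_mem' := by simp
  mul_mem' := by
    intro π σ hπ hσ
    refine Set.Finite.subset (Set.Finite.union hπ hσ) ?_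
    intro a ha
    simp only [Set.mem_setOf_eq, Set.mem_union] at *
    by_contra h
    push_neg at h
    obtain ⟨h1, h2⟩ := h
    exact ha (by rw [Equiv.Perm.mul_apply, h2, h1])
  inv_mem' := by
    intro π hπ
    refine Set.Finite.subset hπ ?_
    intro a ha
    simp only [Set.mem_setOf_eq] at *
    intro h
    exact ha (π.injective (by rw [h]; exact π.apply_symm_apply a))

/-- An element `x` is finitely supported if some finite set of atoms supports it. -/
def FinSupp (A : Type*) {X : Type*} [SMul (FinPerm A) X] (x : X) : Prop :=
  ∃ S : Finset A, MulAction.Supports (FinPerm A) (S : Set A) x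

/-- The least support of an element: the intersection of all finite sets of atoms
supporting it. -/
def supp (A : Type*) {X : Type*} [SMul (FinPerm A) X] (x : X) : Set A :=
  ⋂₀ {S : Set A | S.Finite ∧ MulAction.Supports (FinPerm A) S x}

/-- A set `S` of atoms supports a function `f` if `f (π • x) = π • f x` for every
finitary permutation `π` fixing `S` pointwise. -/
def SuppFun (A : Type*) {X Y : Type*} [SMul (FinPerm A) X] [SMul (FinPerm A) Y]
    (S : Set A) (f : X → Y) : Prop :=
  ∀ π : FinPerm A, (∀ a ∈ S, π • a = a) → ∀ x, f (π • x) = π • f x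

/-- A set `S` of atoms supports a function `f` between the subsets `X` and `Y` if, for
every finitary permutation `π` fixing `S` pointwise and every `x ∈ X`, we have
`π • x ∈ X`, `π • f x ∈ Y` and `f (π • x) = π • f x`. -/
def SuppFunOn (A : Type*) {U V : Type*} [SMul (FinPerm A) U] [SMul (FinPerm A) V]
    (S : Set A) (X : Set U) (Y : Set V) (f : U → V) : Prop :=
  ∀ π : FinPerm A, (∀ a ∈ S, π • a = a) →
    ∀ x ∈ X, π • x ∈ X ∧ π • f x ∈ Y ∧ f (π • x) = π • f x

/-- `℘_fs(X)`: the finitely supported subsets of the set `X`. -/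
def Pfs (A : Type*) {U : Type*} [SMul (FinPerm A) U] (X : Set U) : Set (Set U) :=
  {Z : Set U | Z ⊆ X ∧ FinSupp A Z}

/-
A function `g : A → Set A` supported by a finite set `S` sends each atom `a` to a set
supported by `insert a S`. A finite set of atoms is contained in each of its finite
supports: a point outside the support could be swapped with a fresh atom, moving it
out of the set. Hence every value of `g` has at most `#S + 1` elements, so `g` misses
any finite set with `#S + 2` elements.
-/

namespace FinPerm

variable {A : Type*}

theorem swap_mem [DecidableEq A] (b c : A) : Equiv.swap b c ∈ FinPerm A :=
  (Set.toFinite {b, c}).subset fun x (hx : Equiv.swap b c x ≠ x) => by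
    by_contra hbc
    simp only [Set.mem_insert_iff, Set.mem_singleton_iff, not_or] at hbc
    exact hx (Equiv.swap_apply_of_ne_of_ne hbc.1 hbc.2)

def swap [DecidableEq A] (b c : A) : FinPerm A := ⟨Equiv.swap b c, swap_mem b c⟩

theorem swap_smul [DecidableEq A] (b c x : A) : swap b c • x = Equiv.swap b c x := rfl

end FinPerm

theorem subset_of_supports_of_finite {A : Type*} [Infinite A] {T Y : Set A}
    (hT : T.Finite) (hY : Y.Finite) (hsupp : MulAction.Supports (FinPerm A) T Y) :
    Y ⊆ T := by
  classical
  intro b hbY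
  by_contra hbT
  obtain ⟨c, hc⟩ := (hT.union hY).infinite_compl.nonempty
  simp only [Set.mem_compl_iff, Set.mem_union, not_or] at hc
  have hfix : ∀ x ∈ T, FinPerm.swap b c • x = x := fun x hx => by
    rw [FinPerm.swap_smul]
    exact Equiv.swap_apply_of_ne_of_ne (ne_of_mem_of_not_mem hx hbT)
      (ne_of_mem_of_not_mem hx hc.1)
  have hcY : c ∈ FinPerm.swap b c • Y :=
    Set.mem_smul_set.mpr ⟨b, hbY, by rw [FinPerm.swap_smul, Equiv.swap_apply_left]⟩
  exact hc.2 (hsupp _ hfix ▸ hcY)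

theorem supports_apply_of_suppFun {A X : Type*} [SMul (FinPerm A) X] {S : Set A}
    {g : A → X} (hg : SuppFun A S g) (a : A) :
    MulAction.Supports (FinPerm A) (insert a S) (g a) := fun π hπ => by
  rw [← hg π fun b hb => hπ (Set.mem_insert_of_mem a hb), hπ (Set.mem_insert a S)]

/-- there is no finitely supported surjection from the set `A` of atoms
onto `℘_fin(A)`, the set of finite subsets of `A` with the elementwise action. -/
theorem no_finSupp_surjection_atoms_to_finiteSubsets {A : Type*} [Infinite A] :
    ¬ ∃ (g : A → Set A) (S : Finset A),
      (∀ a : A, (g a).Finite) ∧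
      (∀ Y : Set A, Y.Finite → ∃ a : A, g a = Y) ∧
      (∀ π : FinPerm A, (∀ b ∈ (S : Set A), π • b = b) → ∀ a : A, g (π • a) = π • g a) := by
  classical
  rintro ⟨g, S, hfin, hsurj, hsupp⟩
  obtain ⟨T, hTcard⟩ := Infinite.exists_subset_card_eq A (S.card + 2)
  obtain ⟨a, hga⟩ := hsurj T T.finite_toSet
  have hTsub : (T : Set A) ⊆ ↑(insert a S) := by
    rw [← hga, Finset.coe_insert]
    exact subset_of_supports_of_finite (S.finite_toSet.insert a) (hfin a)
      (supports_apply_of_suppFun hsupp a)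
  have : S.card + 2 ≤ S.card + 1 :=
    calc S.card + 2 = T.card := hTcard.symm
      _ ≤ (insert a S).card := Finset.card_le_card (Finset.coe_subset.mp hTsub)
      _ ≤ S.card + 1 := Finset.card_insert_le a S
  omega
end

section
/- Let f : A → A be a function supported by a finite set S ⊆ A, i.e., f(π a) = π (f a) for every a ∈ A and every finitary permutation π fixing S pointwise. Then either f(a) = a for all a ∈ A ∖ S, or there exists x₀ ∈ S such that f(a) = x₀ for all a ∈ A ∖ S. -/
open Pointwise

lemma swap_mem_finPerm {A : Type*} [DecidableEq A] (a b : A) :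
    Equiv.swap a b ∈ FinPerm A :=
  (Set.toFinite {a, b}).subset fun _ hx ↦ (Equiv.swap_apply_ne_self_iff.mp hx).2

namespace SuppFun

variable {A : Type*} {S : Set A} {f : A → A}

theorem apply_swap [DecidableEq A] (hf : SuppFun A S f) {a b : A} (ha : a ∉ S) (hb : b ∉ S)
    (x : A) : f (Equiv.swap a b x) = Equiv.swap a b (f x) :=
  hf ⟨Equiv.swap a b, swap_mem_finPerm a b⟩
    (fun _ hc ↦ Equiv.swap_apply_of_ne_of_ne (ne_of_mem_of_not_mem hc ha)
      (ne_of_mem_of_not_mem hc hb)) x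

/-- If `f a` were a third atom outside `S`, swapping it with a fresh atom would move `f a`
while fixing `a`. -/
theorem apply_eq_or_mem [Infinite A] (hf : SuppFun A S f) (hS : S.Finite) (a : A) :
    f a = a ∨ f a ∈ S := by
  classical
  by_contra! h
  obtain ⟨c, hc⟩ := (hS.union (Set.toFinite {a, f a})).exists_notMem
  simp only [Set.mem_union, Set.mem_insert_iff, Set.mem_singleton_iff, not_or] at hc
  obtain ⟨hcS, hca, hcfa⟩ := hc
  have := hf.apply_swap h.2 hcS a
  rw [Equiv.swap_apply_of_ne_of_ne (Ne.symm h.1) (Ne.symm hca), Equiv.swap_apply_left] at this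
  exact hcfa this.symm

theorem apply_eq_of_apply_mem (hf : SuppFun A S f) {a b : A} (ha : a ∉ S) (hb : b ∉ S)
    (hfa : f a ∈ S) : f b = f a := by
  classical
  calc f b = f (Equiv.swap a b a) := by rw [Equiv.swap_apply_left]
    _ = Equiv.swap a b (f a) := hf.apply_swap ha hb a
    _ = f a := Equiv.swap_apply_of_ne_of_ne (ne_of_mem_of_not_mem hfa ha)
        (ne_of_mem_of_not_mem hfa hb)

end SuppFun

/-- if `f : A → A` is supported by the finite set `S` of atoms (i.e.
`f (π a) = π (f a)` for every `a` and every finitary permutation `π` fixing `S`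
pointwise), then either `f` is the identity on `A ∖ S`, or there is `x₀ ∈ S` such that
`f` is constantly `x₀` on `A ∖ S`. -/
theorem supported_selfMap_id_or_const_off_support {A : Type*} [Infinite A]
    (f : A → A) (S : Finset A)
    (hf : ∀ π : FinPerm A, (∀ a ∈ (S : Set A), π • a = a) → ∀ a : A, f (π • a) = π • f a) :
    (∀ a ∉ S, f a = a) ∨ (∃ x₀ ∈ S, ∀ a ∉ S, f a = x₀) := by
  by_cases hid : ∀ a ∉ S, f a = a
  · exact Or.inl hid
  push Not at hid
  obtain ⟨a₀, ha₀, hfa₀⟩ := hid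
  have hx₀ : f a₀ ∈ S := (SuppFun.apply_eq_or_mem hf S.finite_toSet a₀).resolve_left hfa₀
  exact Or.inr ⟨f a₀, hx₀, fun a ha ↦ SuppFun.apply_eq_of_apply_mem hf ha₀ ha hx₀⟩
end

section
/- Let X and Y be finitely supported subsets of an invariant set under finitary permutations of A. If neither X nor Y is FSM Dedekind infinite (i.e., neither admits a finitely supported injection from ℕ with the trivial action), then the Cartesian product X × Y with the componentwise action is not FSM Dedekind infinite. -/
open Pointwise

/-- A finitely supported set is FSM Dedekind infinite iff it admits a finitely supported
injection from `ℕ` (with the trivial action). -/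
def FSMDedekindInfinite (A : Type*) {W : Type*} [SMul (FinPerm A) W] (X : Set W) : Prop :=
  ∃ f : ℕ → W, Function.Injective f ∧ (∀ n, f n ∈ X) ∧
    ∃ S : Finset A, ∀ π : FinPerm A, (∀ a ∈ (S : Set A), π • a = a) →
      ∀ n : ℕ, π • f n = f n

/-! The coordinates of an injective sequence in `X × Y` fixed by every permutation fixing `S`
are again fixed by those permutations, and infinitely many values occur in one coordinate;
re-enumerating those values gives such a sequence in `X` or in `Y`. -/

namespace FSMDedekindInfinite

variable {A W V : Type*} [SMul (FinPerm A) W] [SMul (FinPerm A) V]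

lemma of_infinite_fixed {X T : Set W} (hTX : T ⊆ X) (hT : T.Infinite) (S : Finset A)
    (hfix : ∀ π : FinPerm A, (∀ a ∈ (S : Set A), π • a = a) → ∀ t ∈ T, π • t = t) :
    FSMDedekindInfinite A X := by
  let e := hT.natEmbedding
  refine ⟨fun n => e n, Subtype.val_injective.comp e.injective, fun n => hTX (e n).2, S, ?_⟩
  exact fun π hπ n => hfix π hπ _ (e n).2

lemma fst_or_snd {X : Set W} {Y : Set V} (h : FSMDedekindInfinite A (X ×ˢ Y)) :
    FSMDedekindInfinite A X ∨ FSMDedekindInfinite A Y := by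
  obtain ⟨f, hinj, hmem, S, hfix⟩ := h
  have hinf : (Prod.fst '' Set.range f).Infinite ∨ (Prod.snd '' Set.range f).Infinite := by
    by_contra! hboth
    exact Set.infinite_range_of_injective hinj
      ((hboth.1.prod hboth.2).subset Set.subset_fst_image_prod_snd_image)
  refine hinf.imp (of_infinite_fixed ?_ · S ?_) (of_infinite_fixed ?_ · S ?_)
  · rintro _ ⟨_, ⟨n, rfl⟩, rfl⟩
    exact (hmem n).1
  · rintro π hπ _ ⟨_, ⟨n, rfl⟩, rfl⟩
    exact congrArg Prod.fst (hfix π hπ n)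
  · rintro _ ⟨_, ⟨n, rfl⟩, rfl⟩
    exact (hmem n).2
  · rintro π hπ _ ⟨_, ⟨n, rfl⟩, rfl⟩
    exact congrArg Prod.snd (hfix π hπ n)

end FSMDedekindInfinite

theorem fsm_dedekind_infinite_prod_general {A U : Type*}
    [MulAction (FinPerm A) U]
    (X Y : Set U)
    (hXD : ¬ FSMDedekindInfinite A X) (hYD : ¬ FSMDedekindInfinite A Y) :
    ¬ FSMDedekindInfinite A (X ×ˢ Y) :=
  fun h => h.fst_or_snd.elim hXD hYD

/-- if `X` and `Y` are finitely supported subsets of an invariant set and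
neither is FSM Dedekind infinite, then the Cartesian product `X × Y` (with the
componentwise action) is not FSM Dedekind infinite. -/
theorem fsm_dedekind_infinite_prod {A U : Type*} [Infinite A]
    [MulAction (FinPerm A) U] (hU : ∀ u : U, FinSupp A u)
    (X Y : Set U) (hX : FinSupp A X) (hY : FinSupp A Y)
    (hXD : ¬ FSMDedekindInfinite A X) (hYD : ¬ FSMDedekindInfinite A Y) :
    ¬ FSMDedekindInfinite A (X ×ˢ Y) :=
  fsm_dedekind_infinite_prod_general X Y hXD hYD
end
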